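/- arXiv:2208.00857 — 5 statements merged into one kernel-verified Lean document; each statement's English description precedes it below -/
import Mathlib

section
/- Let T ∈ A⊗B⊗C with dim A = dim B = dim C = m be a concise tensor (all three flattening maps A* → B⊗C, etc., are injective). Then the 111-algebra of T, defined as the set of triples (X,Y,Z) ∈ End(A)×End(B)×End(C) with X∘_A T = Y∘_B T = Z∘_C T, is a commutative unital subalgebra of End(A)×End(B)×End(C), and its projection to each of the three factors is injective. -/
/-- The action `X ∘_A T` of `X ∈ End(A)` on the first factor of a tensor
`T ∈ A ⊗ B ⊗ C` (in coordinates): for `X = α ⊗ a` this is `T(α) ⊗ a`. -/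
noncomputable def opA {m : ℕ} (X : Matrix (Fin m) (Fin m) ℂ) (T : Fin m → Fin m → Fin m → ℂ) :
    Fin m → Fin m → Fin m → ℂ := fun i j k => ∑ i', X i i' * T i' j k

/-- The action `Y ∘_B T` on the second factor. -/
noncomputable def opB {m : ℕ} (Y : Matrix (Fin m) (Fin m) ℂ) (T : Fin m → Fin m → Fin m → ℂ) :
    Fin m → Fin m → Fin m → ℂ := fun i j k => ∑ j', Y j j' * T i j' k

/-- The action `Z ∘_C T` on the third factor. -/
noncomputable def opC {m : ℕ} (Z : Matrix (Fin m) (Fin m) ℂ) (T : Fin m → Fin m → Fin m → ℂ) :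
    Fin m → Fin m → Fin m → ℂ := fun i j k => ∑ k', Z k k' * T i j k'

/-- `T` is concise: all three flattening maps `A* → B⊗C`, `B* → A⊗C`,
`C* → A⊗B` are injective. -/
def Concise {m : ℕ} (T : Fin m → Fin m → Fin m → ℂ) : Prop :=
  Function.Injective (fun (α : Fin m → ℂ) => fun j k => ∑ i, α i * T i j k) ∧
  Function.Injective (fun (β : Fin m → ℂ) => fun i k => ∑ j, β j * T i j k) ∧
  Function.Injective (fun (γ : Fin m → ℂ) => fun i j => ∑ k, γ k * T i j k)

/-- The 111-algebra of `T`: triples `(X,Y,Z)` compatible with `T`. -/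
def algT {m : ℕ} (T : Fin m → Fin m → Fin m → ℂ) :
    Set (Matrix (Fin m) (Fin m) ℂ × Matrix (Fin m) (Fin m) ℂ × Matrix (Fin m) (Fin m) ℂ) :=
  {p | opA p.1 T = opB p.2.1 T ∧ opB p.2.1 T = opC p.2.2 T}

section Aux
variable {m : ℕ} (T : Fin m → Fin m → Fin m → ℂ)

lemma opA_opB (X Y : Matrix (Fin m) (Fin m) ℂ) : opA X (opB Y T) = opB Y (opA X T) := by
  funext i j k
  simp only [opA, opB, Finset.mul_sum]
  rw [Finset.sum_comm]
  exact Finset.sum_congr rfl fun _ _ => Finset.sum_congr rfl fun _ _ => by ring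

lemma opA_opC (X Z : Matrix (Fin m) (Fin m) ℂ) : opA X (opC Z T) = opC Z (opA X T) := by
  funext i j k
  simp only [opA, opC, Finset.mul_sum]
  rw [Finset.sum_comm]
  exact Finset.sum_congr rfl fun _ _ => Finset.sum_congr rfl fun _ _ => by ring

lemma opB_opC (Y Z : Matrix (Fin m) (Fin m) ℂ) : opB Y (opC Z T) = opC Z (opB Y T) := by
  funext i j k
  simp only [opB, opC, Finset.mul_sum]
  rw [Finset.sum_comm]
  exact Finset.sum_congr rfl fun _ _ => Finset.sum_congr rfl fun _ _ => by ring

lemma opA_mul (X X' : Matrix (Fin m) (Fin m) ℂ) : opA (X * X') T = opA X (opA X' T) := by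
  funext i j k
  simp only [opA, Matrix.mul_apply, Finset.sum_mul, Finset.mul_sum]
  rw [Finset.sum_comm]
  exact Finset.sum_congr rfl fun _ _ => Finset.sum_congr rfl fun _ _ => by ring

lemma opB_mul (X X' : Matrix (Fin m) (Fin m) ℂ) : opB (X * X') T = opB X (opB X' T) := by
  funext i j k
  simp only [opB, Matrix.mul_apply, Finset.sum_mul, Finset.mul_sum]
  rw [Finset.sum_comm]
  exact Finset.sum_congr rfl fun _ _ => Finset.sum_congr rfl fun _ _ => by ring

lemma opC_mul (X X' : Matrix (Fin m) (Fin m) ℂ) : opC (X * X') T = opC X (opC X' T) := by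
  funext i j k
  simp only [opC, Matrix.mul_apply, Finset.sum_mul, Finset.mul_sum]
  rw [Finset.sum_comm]
  exact Finset.sum_congr rfl fun _ _ => Finset.sum_congr rfl fun _ _ => by ring

lemma opA_inj (h : Function.Injective (fun (α : Fin m → ℂ) => fun j k => ∑ i, α i * T i j k))
    {X X' : Matrix (Fin m) (Fin m) ℂ} (hX : opA X T = opA X' T) : X = X' := by
  funext i i'
  have := h (a₁ := X i) (a₂ := X' i) (by
    funext j k
    exact congrFun (congrFun (congrFun hX i) j) k)
  exact congrFun this i'

lemma opB_inj (h : Function.Injective (fun (β : Fin m → ℂ) => fun i k => ∑ j, β j * T i j k))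
    {X X' : Matrix (Fin m) (Fin m) ℂ} (hX : opB X T = opB X' T) : X = X' := by
  funext j j'
  have := h (a₁ := X j) (a₂ := X' j) (by
    funext i k
    exact congrFun (congrFun (congrFun hX i) j) k)
  exact congrFun this j'

lemma opC_inj (h : Function.Injective (fun (γ : Fin m → ℂ) => fun i j => ∑ k, γ k * T i j k))
    {X X' : Matrix (Fin m) (Fin m) ℂ} (hX : opC X T = opC X' T) : X = X' := by
  funext k k'
  have := h (a₁ := X k) (a₂ := X' k) (by
    funext i j
    exact congrFun (congrFun (congrFun hX i) j) k)
  exact congrFun this k'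


lemma key {X Y Z X' Y' Z' : Matrix (Fin m) (Fin m) ℂ}
    (h1 : opA X T = opB Y T) (h2 : opB Y T = opC Z T)
    (h1' : opA X' T = opB Y' T) (h2' : opB Y' T = opC Z' T) :
    opA (X * X') T = opB (Y * Y') T ∧ opB (Y * Y') T = opC (Z * Z') T ∧
    opA (X * X') T = opA (X' * X) T ∧ opB (Y * Y') T = opB (Y' * Y) T ∧
    opC (Z * Z') T = opC (Z' * Z) T := by
  have F1 : opB Y' (opB Y T) = opC Z' (opC Z T) := by
    calc opB Y' (opB Y T) = opB Y' (opA X T) := by rw [h1]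
      _ = opA X (opB Y' T) := (opA_opB T X Y').symm
      _ = opA X (opC Z' T) := by rw [h2']
      _ = opC Z' (opA X T) := opA_opC T X Z'
      _ = opC Z' (opB Y T) := by rw [h1]
      _ = opC Z' (opC Z T) := by rw [h2]
  have F2 : opB Y (opB Y' T) = opC Z (opC Z' T) := by
    calc opB Y (opB Y' T) = opB Y (opA X' T) := by rw [h1']
      _ = opA X' (opB Y T) := (opA_opB T X' Y).symm
      _ = opA X' (opC Z T) := by rw [h2]
      _ = opC Z (opA X' T) := opA_opC T X' Z
      _ = opC Z (opB Y' T) := by rw [h1']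
      _ = opC Z (opC Z' T) := by rw [h2']
  have G : opC Z' (opC Z T) = opB Y (opB Y' T) := by
    calc opC Z' (opC Z T) = opC Z' (opB Y T) := by rw [h2]
      _ = opB Y (opC Z' T) := (opB_opC T Y Z').symm
      _ = opB Y (opB Y' T) := by rw [h2']
  have E1 : opA X (opA X' T) = opB Y' (opB Y T) := by
    calc opA X (opA X' T) = opA X (opB Y' T) := by rw [h1']
      _ = opB Y' (opA X T) := opA_opB T X Y'
      _ = opB Y' (opB Y T) := by rw [h1]
  have E1' : opA X' (opA X T) = opB Y (opB Y' T) := by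
    calc opA X' (opA X T) = opA X' (opB Y T) := by rw [h1]
      _ = opB Y (opA X' T) := opA_opB T X' Y
      _ = opB Y (opB Y' T) := by rw [h1']
  have main : opA X (opA X' T) = opB Y (opB Y' T) := E1.trans (F1.trans G)
  refine ⟨?_, ?_, ?_, ?_, ?_⟩
  · rw [opA_mul, opB_mul]; exact main
  · rw [opB_mul, opC_mul]; exact F2
  · rw [opA_mul, opA_mul]; exact main.trans E1'.symm
  · rw [opB_mul, opB_mul]; exact G.symm.trans F1.symm
  · rw [opC_mul, opC_mul]; exact F2.symm.trans G.symm

end Aux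

/-- The 111-algebra of a concise tensor `T ∈ A⊗B⊗C` (with
`dim A = dim B = dim C = m`) is a commutative unital subalgebra of
`End(A) × End(B) × End(C)`, and its projection to each factor is injective. -/
theorem algT_comm_unital_subalgebra_and_proj_injective {m : ℕ}
    (T : Fin m → Fin m → Fin m → ℂ) (hT : Concise T) :
    -- unital
    ((1, 1, 1) ∈ algT T) ∧
    -- a linear subspace
    (∀ p q, p ∈ algT T → q ∈ algT T →
      (p.1 + q.1, p.2.1 + q.2.1, p.2.2 + q.2.2) ∈ algT T) ∧
    (∀ (c : ℂ) p, p ∈ algT T → (c • p.1, c • p.2.1, c • p.2.2) ∈ algT T) ∧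
    -- closed under (componentwise) composition
    (∀ p q, p ∈ algT T → q ∈ algT T →
      (p.1 * q.1, p.2.1 * q.2.1, p.2.2 * q.2.2) ∈ algT T) ∧
    -- commutative
    (∀ p q, p ∈ algT T → q ∈ algT T →
      p.1 * q.1 = q.1 * p.1 ∧ p.2.1 * q.2.1 = q.2.1 * p.2.1 ∧
        p.2.2 * q.2.2 = q.2.2 * p.2.2) ∧
    -- the projections to the three factors are injective
    (∀ p q, p ∈ algT T → q ∈ algT T → p.1 = q.1 → p = q) ∧
    (∀ p q, p ∈ algT T → q ∈ algT T → p.2.1 = q.2.1 → p = q) ∧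
    (∀ p q, p ∈ algT T → q ∈ algT T → p.2.2 = q.2.2 → p = q) := by
  obtain ⟨hA, hB, hC⟩ := hT
  refine ⟨?_, ?_, ?_, ?_, ?_, ?_, ?_, ?_⟩
  · constructor <;>
    · funext i j k
      simp [opA, opB, opC, Matrix.one_apply]
  · rintro ⟨X, Y, Z⟩ ⟨X', Y', Z'⟩ ⟨h1, h2⟩ ⟨h1', h2'⟩
    simp only [algT, Set.mem_setOf_eq] at h1 h2 h1' h2' ⊢
    constructor
    · funext i j k
      have e1 := congrFun (congrFun (congrFun h1 i) j) k
      have e1' := congrFun (congrFun (congrFun h1' i) j) k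
      simp only [opA, opB] at e1 e1'
      simp only [opA, opB, Matrix.add_apply, add_mul, Finset.sum_add_distrib]
      rw [e1, e1']
    · funext i j k
      have e2 := congrFun (congrFun (congrFun h2 i) j) k
      have e2' := congrFun (congrFun (congrFun h2' i) j) k
      simp only [opB, opC] at e2 e2'
      simp only [opB, opC, Matrix.add_apply, add_mul, Finset.sum_add_distrib]
      rw [e2, e2']
  · rintro c ⟨X, Y, Z⟩ ⟨h1, h2⟩
    constructor
    · funext i j k
      have e1 := congrFun (congrFun (congrFun h1 i) j) k
      simp only [opA, opB] at e1
      simp only [opA, opB, Matrix.smul_apply, smul_eq_mul, mul_assoc,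
        ← Finset.mul_sum]
      rw [e1]
    · funext i j k
      have e2 := congrFun (congrFun (congrFun h2 i) j) k
      simp only [opB, opC] at e2
      simp only [opB, opC, Matrix.smul_apply, smul_eq_mul, mul_assoc,
        ← Finset.mul_sum]
      rw [e2]
  · rintro ⟨X, Y, Z⟩ ⟨X', Y', Z'⟩ ⟨h1, h2⟩ ⟨h1', h2'⟩
    obtain ⟨k1, k2, _, _, _⟩ := key T h1 h2 h1' h2'
    exact ⟨k1, k2⟩
  · rintro ⟨X, Y, Z⟩ ⟨X', Y', Z'⟩ ⟨h1, h2⟩ ⟨h1', h2'⟩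
    obtain ⟨_, _, cX, cY, cZ⟩ := key T h1 h2 h1' h2'
    exact ⟨opA_inj T hA cX, opB_inj T hB cY, opC_inj T hC cZ⟩
  · rintro ⟨X, Y, Z⟩ ⟨X', Y', Z'⟩ ⟨h1, h2⟩ ⟨h1', h2'⟩ (h : X = X')
    subst h
    have hY : Y = Y' := opB_inj T hB (by
      show opB Y T = opB Y' T
      rw [← h1, ← h1'])
    have hZ : Z = Z' := opC_inj T hC (by
      show opC Z T = opC Z' T
      rw [← h2, ← h2', hY])
    simp [hY, hZ]
  · rintro ⟨X, Y, Z⟩ ⟨X', Y', Z'⟩ ⟨h1, h2⟩ ⟨h1', h2'⟩ (h : Y = Y')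
    subst h
    have hX : X = X' := opA_inj T hA (by
      show opA X T = opA X' T
      rw [h1, h1'])
    have hZ : Z = Z' := opC_inj T hC (by
      show opC Z T = opC Z' T
      rw [← h2, ← h2'])
    simp [hX, hZ]
  · rintro ⟨X, Y, Z⟩ ⟨X', Y', Z'⟩ ⟨h1, h2⟩ ⟨h1', h2'⟩ (h : Z = Z')
    subst h
    have hY : Y = Y' := opB_inj T hB (by
      show opB Y T = opB Y' T
      rw [h2, h2'])
    have hX : X = X' := opA_inj T hA (by
      show opA X T = opA X' T
      rw [h1, h1', hY])
    simp [hX, hY]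
end

section
/- Let T ∈ A⊗B⊗C with dim A = dim B = dim C = m be 1_A- and 1_B-generic (there exist α₀ ∈ A* with T_A(α₀): B* → C invertible and β₀ ∈ B* with T_B(β₀): A* → C invertible) and satisfy the A-Strassen equations: T_A(α₁)T_A(α₀)⁻¹T_A(α₂) = T_A(α₂)T_A(α₀)⁻¹T_A(α₁) for all α₁, α₂ ∈ A*. Then T is isomorphic (under GL(A)×GL(B)×GL(C)) to a tensor in S²C*⊗C, i.e., the bilinear map T̃(c₁,c₂) := T(T_B(β₀)⁻¹c₁, T_A(α₀)⁻¹c₂) is symmetric. -/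
open Matrix

/-- The contraction `T_A(α) : B* → C` of `T ∈ A⊗B⊗C` with `α ∈ A*`,
as a matrix (rows indexed by `C`, columns by `B*`). -/
noncomputable def TA {m : ℕ} (T : Fin m → Fin m → Fin m → ℂ) (α : Fin m → ℂ) :
    Matrix (Fin m) (Fin m) ℂ := fun k j => ∑ i, α i * T i j k

/-- The contraction `T_B(β) : A* → C` of `T` with `β ∈ B*`. -/
noncomputable def TB {m : ℕ} (T : Fin m → Fin m → Fin m → ℂ) (β : Fin m → ℂ) :
    Matrix (Fin m) (Fin m) ℂ := fun k i => ∑ j, β j * T i j k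

/-- The vector `T(α, β) ∈ C`. -/
noncomputable def Tvec {m : ℕ} (T : Fin m → Fin m → Fin m → ℂ)
    (α β : Fin m → ℂ) : Fin m → ℂ := fun k => ∑ i, ∑ j, α i * β j * T i j k

lemma tvec_eq_TA {m : ℕ} (T : Fin m → Fin m → Fin m → ℂ) (α β : Fin m → ℂ) :
    Tvec T α β = TA T α *ᵥ β := by
  funext k
  simp only [Tvec, TA, Matrix.mulVec, dotProduct, Finset.sum_mul]
  conv_lhs => rw [Finset.sum_comm]
  exact Finset.sum_congr rfl fun i _ => Finset.sum_congr rfl fun j _ => by ring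

lemma TA_mulVec_eq_TB {m : ℕ} (T : Fin m → Fin m → Fin m → ℂ) (α β : Fin m → ℂ) :
    TA T α *ᵥ β = TB T β *ᵥ α := by
  funext k
  simp only [TA, TB, Matrix.mulVec, dotProduct, Finset.sum_mul]
  conv_lhs => rw [Finset.sum_comm]
  exact Finset.sum_congr rfl fun i _ => Finset.sum_congr rfl fun j _ => by ring

/-- Proposition 7.1 (Prop. `prop1` of the paper): if `T ∈ A⊗B⊗C`
(`dim A = dim B = dim C = m`) is `1_A`- and `1_B`-generic, with `T_A(α₀)` and
`T_B(β₀)` invertible, and satisfies the `A`-Strassen equations, then `T` is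
isomorphic to a tensor in `S²C* ⊗ C`: the bilinear map
`T̃(c₁,c₂) := T(T_B(β₀)⁻¹ c₁, T_A(α₀)⁻¹ c₂)` is symmetric. -/
theorem symmetric_of_strassen {m : ℕ} (T : Fin m → Fin m → Fin m → ℂ)
    (α₀ β₀ : Fin m → ℂ)
    (hA : IsUnit (TA T α₀).det) (hB : IsUnit (TB T β₀).det)
    (hStrassen : ∀ α₁ α₂ : Fin m → ℂ,
      TA T α₁ * (TA T α₀)⁻¹ * TA T α₂ = TA T α₂ * (TA T α₀)⁻¹ * TA T α₁) :
    ∀ c₁ c₂ : Fin m → ℂ,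
      Tvec T ((TB T β₀)⁻¹ *ᵥ c₁) ((TA T α₀)⁻¹ *ᵥ c₂) =
        Tvec T ((TB T β₀)⁻¹ *ᵥ c₂) ((TA T α₀)⁻¹ *ᵥ c₁) := by
  intro c₁ c₂
  have hMinv : TB T β₀ * (TB T β₀)⁻¹ = 1 := Matrix.mul_nonsing_inv _ hB
  have key : ∀ c : Fin m → ℂ, TA T ((TB T β₀)⁻¹ *ᵥ c) *ᵥ β₀ = c := by
    intro c
    rw [TA_mulVec_eq_TB, Matrix.mulVec_mulVec, hMinv, Matrix.one_mulVec]
  have expand : ∀ a b : Fin m → ℂ,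
      Tvec T ((TB T β₀)⁻¹ *ᵥ a) ((TA T α₀)⁻¹ *ᵥ b) =
        (TA T ((TB T β₀)⁻¹ *ᵥ a) * (TA T α₀)⁻¹ * TA T ((TB T β₀)⁻¹ *ᵥ b)) *ᵥ β₀ := by
    intro a b
    rw [tvec_eq_TA]
    conv_lhs => rw [← key b]
    rw [Matrix.mulVec_mulVec, Matrix.mulVec_mulVec]
  rw [expand, expand, hStrassen]
end

section
/- Let T̃ ∈ S²C*⊗C be a symmetric-in-first-two-factors tensor on C ≅ ℂ^m satisfying T̃_{C*}(c₁)T̃_{C*}(c₂) = T̃_{C*}(c₂)T̃_{C*}(c₁) as endomorphisms of C for all c₁, c₂ ∈ C. Then T̃_{C*}(c₁)∘T̃_{C*}(c₂) = T̃_{C*}(T̃(c₁,c₂)) for all c₁, c₂ ∈ C, i.e., the image {T̃_{C*}(c) : c ∈ C} ⊆ End(C) is closed under composition. -/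
open Matrix

/-- For `T̃ ∈ C*⊗C*⊗C` with coordinates `S i j k`, the endomorphism
`T̃_{C*}(c) : C → C`, `c' ↦ T̃(c, c')`, as a matrix. -/
noncomputable def endoOf {m : ℕ} (S : Fin m → Fin m → Fin m → ℂ) (c : Fin m → ℂ) :
    Matrix (Fin m) (Fin m) ℂ := fun k j => ∑ i, c i * S i j k

lemma endoOf_single {m : ℕ} (S : Fin m → Fin m → Fin m → ℂ) (a k j : Fin m) :
    endoOf S (Pi.single a 1) k j = S a j k := by
  simp [endoOf, Pi.single_apply, ite_mul]

lemma key_s7 {m : ℕ} (S : Fin m → Fin m → Fin m → ℂ)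
    (hsym : ∀ i j k, S i j k = S j i k)
    (hcomm : ∀ c₁ c₂ : Fin m → ℂ, endoOf S c₁ * endoOf S c₂ = endoOf S c₂ * endoOf S c₁)
    (a b j k : Fin m) :
    ∑ l, S a l k * S b j l = ∑ i, S a b i * S i j k := by
  have h := congrFun (congrFun (hcomm (Pi.single a 1) (Pi.single j 1)) k) b
  simp only [Matrix.mul_apply, endoOf_single] at h
  calc ∑ l, S a l k * S b j l = ∑ l, S a l k * S j b l := by
        simp_rw [hsym b j]
    _ = ∑ l, S j l k * S a b l := h
    _ = ∑ i, S a b i * S i j k := by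
        refine Finset.sum_congr rfl fun i _ => ?_
        rw [hsym j i, mul_comm]

/-- Let `T̃ ∈ S²C*⊗C` be symmetric in its first two factors and suppose the
endomorphisms `T̃_{C*}(c)` pairwise commute (Strassen's equations).  Then
`T̃_{C*}(c₁) ∘ T̃_{C*}(c₂) = T̃_{C*}(T̃(c₁,c₂))`; in particular the image
`{T̃_{C*}(c) : c ∈ C} ⊆ End(C)` is closed under composition. -/
theorem endoOf_mul_eq_endoOf_apply {m : ℕ} (S : Fin m → Fin m → Fin m → ℂ)
    (hsym : ∀ i j k, S i j k = S j i k)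
    (hcomm : ∀ c₁ c₂ : Fin m → ℂ, endoOf S c₁ * endoOf S c₂ = endoOf S c₂ * endoOf S c₁) :
    ∀ c₁ c₂ : Fin m → ℂ,
      endoOf S c₁ * endoOf S c₂ =
        endoOf S (fun k => ∑ i, ∑ j, c₁ i * c₂ j * S i j k) := by
  intro c₁ c₂
  ext k j
  simp only [Matrix.mul_apply, endoOf]
  calc ∑ l, (∑ a, c₁ a * S a l k) * ∑ b, c₂ b * S b j l
      = ∑ a, ∑ b, c₁ a * c₂ b * ∑ l, S a l k * S b j l := by
        simp_rw [Finset.sum_mul, Finset.mul_sum]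
        rw [Finset.sum_comm]
        refine Finset.sum_congr rfl fun a _ => ?_
        rw [Finset.sum_comm]
        refine Finset.sum_congr rfl fun b _ => Finset.sum_congr rfl fun l _ => ?_
        ring
    _ = ∑ i, (∑ a, ∑ b, c₁ a * c₂ b * S a b i) * S i j k := by
        simp_rw [key_s7 S hsym hcomm, Finset.mul_sum, Finset.sum_mul]
        conv_rhs => rw [Finset.sum_comm]
        refine Finset.sum_congr rfl fun a _ => ?_
        conv_rhs => rw [Finset.sum_comm]
        refine Finset.sum_congr rfl fun b _ => Finset.sum_congr rfl fun i _ => ?_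
        ring
end

section
/- Let A = ℂ[x₁,…,x_q]/(x_i x_j, x_i² − x_j², x_i³ : i ≠ j). Then A is a finite-dimensional algebra of dimension q+2 with basis {1, x₁, …, x_q, [x₁²]}, where the classes [x_i²] all coincide, and its structure tensor, in the basis e₀ = 1*, e_i = x_i*, e_{q+1} = [x₁²]* of the first two factors and e₀ = [x₁²], e_i = x_i, e_{q+1} = 1 of the third factor, equals the big Coppersmith–Winograd tensor T_{CW,q} = e₀⊗e₀⊗e_{q+1} + Σ_{i=1}^q (e₀⊗e_i⊗e_i + e_i⊗e₀⊗e_i + e_i⊗e_i⊗e₀) + e₀⊗e_{q+1}⊗e₀ + e_{q+1}⊗e₀⊗e₀. -/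
open MvPolynomial

/-- The big Coppersmith–Winograd tensor `T_{CW,q}` in coordinates on
`ℂ^{q+2}`: `e₀⊗e₀⊗e_{q+1} + Σᵢ (e₀⊗eᵢ⊗eᵢ + eᵢ⊗e₀⊗eᵢ + eᵢ⊗eᵢ⊗e₀)
+ e₀⊗e_{q+1}⊗e₀ + e_{q+1}⊗e₀⊗e₀`, where `i` ranges over the "middle"
indices `1,…,q`. -/
noncomputable def cwTensor (q : ℕ) : Fin (q + 2) → Fin (q + 2) → Fin (q + 2) → ℂ :=
  fun I J K =>
    (if I = 0 ∧ J = 0 ∧ K = Fin.last (q + 1) then (1 : ℂ) else 0) +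
    (if I = 0 ∧ (J ≠ 0 ∧ J ≠ Fin.last (q + 1)) ∧ K = J then 1 else 0) +
    (if (I ≠ 0 ∧ I ≠ Fin.last (q + 1)) ∧ J = 0 ∧ K = I then 1 else 0) +
    (if (I ≠ 0 ∧ I ≠ Fin.last (q + 1)) ∧ J = I ∧ K = 0 then 1 else 0) +
    (if I = 0 ∧ J = Fin.last (q + 1) ∧ K = 0 then 1 else 0) +
    (if I = Fin.last (q + 1) ∧ J = 0 ∧ K = 0 then 1 else 0)

/-- The ideal `(xᵢxⱼ, xᵢ² − xⱼ², xᵢ³ : i ≠ j)` in `ℂ[x₁,…,x_q]`. -/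
noncomputable def cwIdeal (q : ℕ) : Ideal (MvPolynomial (Fin q) ℂ) :=
  Ideal.span ({f | ∃ i j : Fin q, i ≠ j ∧ f = X i * X j} ∪
    {f | ∃ i j : Fin q, i ≠ j ∧ f = X i ^ 2 - X j ^ 2} ∪
    {f | ∃ i : Fin q, f = X i ^ 3})

/-!
The classes `1, x₁, …, x_q, s = [x₁²]` span `A`: their span contains `1` and is stable under
multiplication by every `xᵢ`, since `xᵢ xⱼ = δᵢⱼ s` and `xᵢ s = 0` in `A`. They are linearly
independent because `A` has a hand-made regular representation: the matrices of multiplication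
by `xᵢ` in the expected basis commute and satisfy the defining relations, so `A` maps to the
commutative matrix algebra they generate, and the first column of the image of `a` is the
coordinate vector of `a`. The multiplication table of the basis is then `T_{CW,q}`, once `1` and
`s` are exchanged in the third factor.
-/

lemma Module.Basis.repr_sum_smul_perm {ι R M : Type*} [Fintype ι] [Semiring R] [AddCommMonoid M]
    [Module R M] (b : Module.Basis ι R M) (σ : Equiv.Perm ι) (c : ι → R) (i : ι) :
    b.repr (∑ j, c j • b (σ j)) (σ i) = c i := by
  have hsum : ∑ j, c j • b (σ j) = ∑ j, c (σ.symm j) • b j := by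
    simpa using Equiv.sum_comp σ fun j => c (σ.symm j) • b j
  rw [hsum, b.repr_sum_self, Equiv.symm_apply_apply]

lemma Fin.eq_zero_or_eq_succ_castSucc_or_eq_last {n : ℕ} (k : Fin (n + 2)) :
    k = 0 ∨ (∃ i : Fin n, k = i.succ.castSucc) ∨ k = Fin.last (n + 1) := by
  induction k using Fin.lastCases with
  | last => exact .inr (.inr rfl)
  | cast j =>
    induction j using Fin.cases with
    | zero => exact .inl rfl
    | succ i => exact .inr (.inl ⟨i, rfl⟩)

namespace CoppersmithWinograd

noncomputable section

variable {q : ℕ}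

section Tensor

lemma cwTensor_zero_left (J K : Fin (q + 2)) :
    cwTensor q 0 J K = if K = Equiv.swap 0 (Fin.last (q + 1)) J then 1 else 0 := by
  rcases Fin.eq_zero_or_eq_succ_castSucc_or_eq_last J with rfl | ⟨j, rfl⟩ | rfl <;>
    simp [cwTensor, Equiv.swap_apply_of_ne_of_ne]

lemma cwTensor_zero_right (I K : Fin (q + 2)) :
    cwTensor q I 0 K = if K = Equiv.swap 0 (Fin.last (q + 1)) I then 1 else 0 := by
  rcases Fin.eq_zero_or_eq_succ_castSucc_or_eq_last I with rfl | ⟨i, rfl⟩ | rfl <;>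
    simp [cwTensor, Equiv.swap_apply_of_ne_of_ne, (Fin.succ_ne_zero _).symm]

lemma cwTensor_of_ne_zero {I J : Fin (q + 2)} (hI : I ≠ 0) (hJ : J ≠ 0) (K : Fin (q + 2)) :
    cwTensor q I J K = if I ≠ Fin.last (q + 1) ∧ I = J ∧ K = 0 then 1 else 0 := by
  simp [cwTensor, hI, hJ, eq_comm]

end Tensor

section Quotient

variable (q)

lemma X_mul_X_mem_cwIdeal {i j : Fin q} (h : i ≠ j) : X i * X j ∈ cwIdeal q :=
  Ideal.subset_span (.inl (.inl ⟨i, j, h, rfl⟩))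

lemma X_sq_sub_X_sq_mem_cwIdeal {i j : Fin q} (h : i ≠ j) : X i ^ 2 - X j ^ 2 ∈ cwIdeal q :=
  Ideal.subset_span (.inl (.inr ⟨i, j, h, rfl⟩))

lemma X_pow_three_mem_cwIdeal (i : Fin q) : X i ^ 3 ∈ cwIdeal q :=
  Ideal.subset_span (.inr ⟨i, rfl⟩)

variable {q}

lemma mk_X_mul_mk_X_of_ne {i j : Fin q} (h : i ≠ j) :
    Ideal.Quotient.mk (cwIdeal q) (X i) * Ideal.Quotient.mk (cwIdeal q) (X j) = 0 := by
  rw [← map_mul, Ideal.Quotient.eq_zero_iff_mem]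
  exact X_mul_X_mem_cwIdeal q h

lemma mk_X_sq_eq_mk_X_sq (i j : Fin q) :
    Ideal.Quotient.mk (cwIdeal q) (X i) ^ 2 = Ideal.Quotient.mk (cwIdeal q) (X j) ^ 2 := by
  obtain rfl | h := eq_or_ne i j
  · rfl
  · simpa only [map_pow] using Ideal.Quotient.eq.mpr (X_sq_sub_X_sq_mem_cwIdeal q h)

lemma mk_X_pow_three (i : Fin q) : Ideal.Quotient.mk (cwIdeal q) (X i) ^ 3 = 0 := by
  rw [← map_pow, Ideal.Quotient.eq_zero_iff_mem]
  exact X_pow_three_mem_cwIdeal q i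

variable (q) in
def cwBasisFun (hq : 0 < q) : Fin (q + 2) → MvPolynomial (Fin q) ℂ ⧸ cwIdeal q :=
  Fin.snoc (α := fun _ => _) (Fin.cons 1 fun i => Ideal.Quotient.mk (cwIdeal q) (X i))
    (Ideal.Quotient.mk (cwIdeal q) (X ⟨0, hq⟩ ^ 2))

variable (hq : 0 < q)

@[simp] lemma cwBasisFun_zero : cwBasisFun q hq 0 = 1 := by
  simp [cwBasisFun]

@[simp] lemma cwBasisFun_castSucc_succ (i : Fin q) :
    cwBasisFun q hq i.castSucc.succ = Ideal.Quotient.mk (cwIdeal q) (X i) := by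
  rw [cwBasisFun, Fin.succ_castSucc, Fin.snoc_castSucc, Fin.cons_succ]

lemma cwBasisFun_last (i : Fin q) :
    cwBasisFun q hq (Fin.last (q + 1)) = Ideal.Quotient.mk (cwIdeal q) (X i) ^ 2 := by
  simp [cwBasisFun, mk_X_sq_eq_mk_X_sq _ i]

lemma cwBasisFun_mul (I J : Fin (q + 2)) :
    cwBasisFun q hq I * cwBasisFun q hq J =
      ∑ K, cwTensor q I J K • cwBasisFun q hq (Equiv.swap 0 (Fin.last (q + 1)) K) := by
  by_cases hI : I = 0
  · subst hI
    simp [cwTensor_zero_left, ite_smul]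
  by_cases hJ : J = 0
  · subst hJ
    simp [cwTensor_zero_right, ite_smul]
  simp only [cwTensor_of_ne_zero hI hJ, ite_smul, one_smul, zero_smul]
  rcases Fin.eq_zero_or_eq_succ_castSucc_or_eq_last I with rfl | ⟨i, rfl⟩ | rfl
  · exact absurd rfl hI
  all_goals rcases Fin.eq_zero_or_eq_succ_castSucc_or_eq_last J with rfl | ⟨j, rfl⟩ | rfl
  · exact absurd rfl hJ
  · obtain rfl | hij := eq_or_ne i j
    · simp [cwBasisFun_last hq i, sq]
    · simp [mk_X_mul_mk_X_of_ne hij, hij]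
  · simp [cwBasisFun_last hq i, ← pow_succ', mk_X_pow_three]
  · exact absurd rfl hJ
  · simp [cwBasisFun_last hq j, ← pow_succ, mk_X_pow_three]
  · simp [cwBasisFun_last hq ⟨0, hq⟩, ← pow_add, pow_succ _ 3, mk_X_pow_three]

lemma span_cwBasisFun_eq_top : Submodule.span ℂ (Set.range (cwBasisFun q hq)) = ⊤ := by
  set P := Submodule.span ℂ (Set.range (cwBasisFun q hq))
  have mem_P (k : Fin (q + 2)) : cwBasisFun q hq k ∈ P := Submodule.subset_span ⟨k, rfl⟩
  have mul_mem_P (a : MvPolynomial (Fin q) ℂ ⧸ cwIdeal q) (ha : a ∈ P) (J : Fin (q + 2)) :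
      a * cwBasisFun q hq J ∈ P := by
    induction ha using Submodule.span_induction with
    | mem x hx =>
      obtain ⟨I, rfl⟩ := hx
      rw [cwBasisFun_mul]
      exact P.sum_mem fun K _ => P.smul_mem _ (mem_P _)
    | zero => simp
    | add x y _ _ hx hy => rw [add_mul]; exact P.add_mem hx hy
    | smul c x _ hx => rw [smul_mul_assoc]; exact P.smul_mem c hx
  rw [eq_top_iff]
  rintro a -
  obtain ⟨p, rfl⟩ := Ideal.Quotient.mk_surjective a
  induction p using MvPolynomial.induction_on with
  | C c =>
    rw [← MvPolynomial.algebraMap_eq, Ideal.Quotient.mk_algebraMap,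
      Algebra.algebraMap_eq_smul_one, ← cwBasisFun_zero hq]
    exact P.smul_mem c (mem_P 0)
  | add p r hp hr => rw [map_add]; exact P.add_mem hp hr
  | mul_X p i hp => rw [map_mul, ← cwBasisFun_castSucc_succ hq i]; exact mul_mem_P _ hp _

end Quotient

section Model

variable (q)

-- Multiplication by `xᵢ` on `A` in the basis `1, x₁, …, x_q, [x₁²]`: `1 ↦ xᵢ ↦ [x₁²]`.
def mulXMatrix (i : Fin q) : Matrix (Fin (q + 2)) (Fin (q + 2)) ℂ :=
  Matrix.single i.succ.castSucc 0 1 + Matrix.single (Fin.last (q + 1)) i.succ.castSucc 1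

def socleMatrix : Matrix (Fin (q + 2)) (Fin (q + 2)) ℂ := Matrix.single (Fin.last (q + 1)) 0 1

variable {q}

lemma mulXMatrix_mul_mulXMatrix (i j : Fin q) :
    mulXMatrix q i * mulXMatrix q j = if i = j then socleMatrix q else 0 := by
  split_ifs with h
  · subst h
    simp [mulXMatrix, socleMatrix, add_mul, mul_add, Matrix.single_mul_single_same,
      Matrix.single_mul_single_of_ne, (Fin.succ_ne_zero _).symm]
  · simp [mulXMatrix, add_mul, mul_add, Matrix.single_mul_single_of_ne,
      (Fin.succ_ne_zero _).symm, h]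

lemma socleMatrix_mul_mulXMatrix (i : Fin q) : socleMatrix q * mulXMatrix q i = 0 := by
  simp [mulXMatrix, socleMatrix, mul_add, Matrix.single_mul_single_of_ne,
    (Fin.succ_ne_zero _).symm]

variable (q)

abbrev MatrixModel := Algebra.adjoin ℂ (Set.range (mulXMatrix q))

instance : IsMulCommutative (MatrixModel q) :=
  Algebra.isMulCommutative_adjoin ℂ <| by
    rintro _ ⟨i, rfl⟩ _ ⟨j, rfl⟩
    simp only [mulXMatrix_mul_mulXMatrix, eq_comm]

open scoped IsMulCommutative

def toMatrixModel : MvPolynomial (Fin q) ℂ →ₐ[ℂ] MatrixModel q :=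
  aeval fun i => ⟨mulXMatrix q i, Algebra.subset_adjoin ⟨i, rfl⟩⟩

lemma cwIdeal_le_ker_toMatrixModel : cwIdeal q ≤ RingHom.ker (toMatrixModel q) := by
  rw [cwIdeal, Ideal.span_le]
  rintro f ((⟨i, j, hij, rfl⟩ | ⟨i, j, hij, rfl⟩) | ⟨i, rfl⟩)
  · simp [toMatrixModel, ← Subtype.coe_inj, mulXMatrix_mul_mulXMatrix, hij]
  · simp [toMatrixModel, sq, mulXMatrix_mul_mulXMatrix]
  · simp [toMatrixModel, ← Subtype.coe_inj, pow_succ, mulXMatrix_mul_mulXMatrix,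
      socleMatrix_mul_mulXMatrix]

def regularRep : (MvPolynomial (Fin q) ℂ ⧸ cwIdeal q) →ₐ[ℂ] Matrix (Fin (q + 2)) (Fin (q + 2)) ℂ :=
  (MatrixModel q).val.comp (Ideal.Quotient.liftₐ (cwIdeal q) (toMatrixModel q)
    fun _ ha => RingHom.mem_ker.mp (cwIdeal_le_ker_toMatrixModel q ha))

def coordinates : (MvPolynomial (Fin q) ℂ ⧸ cwIdeal q) →ₗ[ℂ] Fin (q + 2) → ℂ :=
  LinearMap.applyₗ (Pi.single 0 1) ∘ₗ Matrix.toLin'.toLinearMap ∘ₗ (regularRep q).toLinearMap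

variable {q}

lemma regularRep_mk_X (i : Fin q) :
    regularRep q (Ideal.Quotient.mk (cwIdeal q) (X i)) = mulXMatrix q i := by
  change ((toMatrixModel q (X i) : MatrixModel q) : Matrix (Fin (q + 2)) (Fin (q + 2)) ℂ) = _
  simp [toMatrixModel]

lemma coordinates_apply (a : MvPolynomial (Fin q) ℂ ⧸ cwIdeal q) :
    coordinates q a = (regularRep q a).col 0 := by
  simp [coordinates]

variable (hq : 0 < q)

lemma coordinates_cwBasisFun (k : Fin (q + 2)) :
    coordinates q (cwBasisFun q hq k) = Pi.single k 1 := by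
  ext m
  rcases Fin.eq_zero_or_eq_succ_castSucc_or_eq_last k with rfl | ⟨i, rfl⟩ | rfl
  · simp [coordinates_apply, Matrix.one_apply, Pi.single_apply]
  · simp [coordinates_apply, regularRep_mk_X, mulXMatrix, Matrix.single_apply, Pi.single_apply,
      eq_comm]
  · simp [cwBasisFun_last hq ⟨0, hq⟩, coordinates_apply, regularRep_mk_X, sq,
      mulXMatrix_mul_mulXMatrix, socleMatrix, Matrix.single_apply, Pi.single_apply, eq_comm]

lemma linearIndependent_cwBasisFun : LinearIndependent ℂ (cwBasisFun q hq) :=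
  .of_comp (coordinates q) <| by
    simpa [Function.comp_def, coordinates_cwBasisFun] using
      Pi.linearIndependent_single_one (Fin (q + 2)) ℂ

end Model

end

end CoppersmithWinograd

open CoppersmithWinograd in
/-- Let `A = ℂ[x₁,…,x_q]/(xᵢxⱼ, xᵢ²−xⱼ², xᵢ³ : i ≠ j)`.  Then `A` has
dimension `q+2`, with basis `{1, x₁, …, x_q, [x₁²]}` (so in particular all
classes `[xᵢ²]` coincide), and its structure tensor, after relabeling the
third-factor basis by the swap `1 ↔ [x₁²]` (indices `0 ↔ q+1`), equals the big
Coppersmith–Winograd tensor `T_{CW,q}`. -/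
theorem structure_tensor_cwAlgebra_eq_cwTensor (q : ℕ) (hq : 0 < q) :
    ∃ b : Module.Basis (Fin (q + 2)) ℂ (MvPolynomial (Fin q) ℂ ⧸ cwIdeal q),
      b 0 = 1 ∧
      (∀ i : Fin q, b i.succ.castSucc = Ideal.Quotient.mk (cwIdeal q) (X i)) ∧
      (∀ i : Fin q, b (Fin.last (q + 1)) = Ideal.Quotient.mk (cwIdeal q) (X i ^ 2)) ∧
      ∀ I J K : Fin (q + 2),
        b.repr (b I * b J) (Equiv.swap 0 (Fin.last (q + 1)) K) = cwTensor q I J K := by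
  obtain ⟨b, hb⟩ : ∃ b : Module.Basis (Fin (q + 2)) ℂ (MvPolynomial (Fin q) ℂ ⧸ cwIdeal q),
      ⇑b = cwBasisFun q hq :=
    ⟨.mk (linearIndependent_cwBasisFun hq) (span_cwBasisFun_eq_top hq).ge, Module.Basis.coe_mk _ _⟩
  refine ⟨b, ?_, fun i => ?_, fun i => ?_, fun I J K => ?_⟩ <;> rw [hb]
  · exact cwBasisFun_zero hq
  · simp
  · simp [cwBasisFun_last hq i]
  · rw [cwBasisFun_mul, ← hb, Module.Basis.repr_sum_smul_perm]
end

section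
/- Let T ∈ A⊗B⊗C be a concise tensor of border rank m = dim A = dim B = dim C (minimal border rank). Then dim((T(A*)⊗A) ∩ (T(B*)⊗B) ∩ (T(C*)⊗C)) ≥ m, where the intersection is taken inside A⊗B⊗C (identifying T(A*)⊗A ⊆ B⊗C⊗A ≅ A⊗B⊗C etc.). -/
/-- The linear map `End(A) → A⊗B⊗C`, `X ↦ X ∘_A T`, whose image is
`T(A*) ⊗ A` (viewed inside `A⊗B⊗C`). -/
noncomputable def phiA {m : ℕ} (T : Fin m → Fin m → Fin m → ℂ) :
    Matrix (Fin m) (Fin m) ℂ →ₗ[ℂ] (Fin m → Fin m → Fin m → ℂ) where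
  toFun X := fun i j k => ∑ i', X i i' * T i' j k
  map_add' X Y := by funext i j k; simp [add_mul, Finset.sum_add_distrib]
  map_smul' c X := by
    funext i j k
    simp [Matrix.smul_apply, smul_eq_mul, Finset.mul_sum, mul_assoc]

/-- The linear map `End(B) → A⊗B⊗C`, `Y ↦ Y ∘_B T`, whose image is `T(B*) ⊗ B`. -/
noncomputable def phiB {m : ℕ} (T : Fin m → Fin m → Fin m → ℂ) :
    Matrix (Fin m) (Fin m) ℂ →ₗ[ℂ] (Fin m → Fin m → Fin m → ℂ) where
  toFun Y := fun i j k => ∑ j', Y j j' * T i j' k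
  map_add' X Y := by funext i j k; simp [add_mul, Finset.sum_add_distrib]
  map_smul' c X := by
    funext i j k
    simp [Matrix.smul_apply, smul_eq_mul, Finset.mul_sum, mul_assoc]

/-- The linear map `End(C) → A⊗B⊗C`, `Z ↦ Z ∘_C T`, whose image is `T(C*) ⊗ C`. -/
noncomputable def phiC {m : ℕ} (T : Fin m → Fin m → Fin m → ℂ) :
    Matrix (Fin m) (Fin m) ℂ →ₗ[ℂ] (Fin m → Fin m → Fin m → ℂ) where
  toFun Z := fun i j k => ∑ k', Z k k' * T i j k'
  map_add' X Y := by funext i j k; simp [add_mul, Finset.sum_add_distrib]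
  map_smul' c X := by
    funext i j k
    simp [Matrix.smul_apply, smul_eq_mul, Finset.mul_sum, mul_assoc]

/-- Tensors of rank at most `r`. -/
def rankAtMost (m r : ℕ) : Set (Fin m → Fin m → Fin m → ℂ) :=
  {S | ∃ (u v w : Fin r → Fin m → ℂ),
    S = fun i j k => ∑ l, u l i * v l j * w l k}

/-!
The triples `(X, Y, Z) ∈ End A × End B × End C` with `X·T = Y·T = Z·T` form the kernel of a
linear map depending continuously on `T`, so the dimension of this space is upper
semicontinuous in `T`. For `T = ∑ₗ aₗ ⊗ bₗ ⊗ cₗ` with `{aₗ}`, `{bₗ}`, `{cₗ}` bases, the triples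
acting diagonally with the same eigenvalues in these three bases give an `m`-dimensional
subspace; such tensors are dense among the tensors of rank at most `m`, hence the bound passes
to every tensor of border rank `m`. For concise `T` the map `(X, Y, Z) ↦ X·T` is injective and
lands in the triple intersection.
-/

open Module LinearMap Matrix

section Semicontinuity

variable {𝕜 E F X : Type*} [NontriviallyNormedField 𝕜] [CompleteSpace 𝕜]
  [AddCommGroup E] [Module 𝕜 E] [NormedAddCommGroup F] [NormedSpace 𝕜 F] [FiniteDimensional 𝕜 F]
  [TopologicalSpace X]

theorem isOpen_setOf_le_finrank_range (f : X → E →ₗ[𝕜] F)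
    (hf : ∀ v, Continuous fun x => f x v) (n : ℕ) :
    IsOpen {x | n ≤ finrank 𝕜 (range (f x))} := by
  have le_iff (x : X) : n ≤ finrank 𝕜 (range (f x)) ↔
      ∃ s : Finset E, s.card = n ∧ LinearIndependent 𝕜 fun v : (s : Set E) => f x v := by
    rw [← LinearMap.le_rank_iff_exists_linearIndependent_finset, LinearMap.rank, ← finrank_eq_rank,
      Nat.cast_le]
  refine isOpen_iff_mem_nhds.2 fun x hx => ?_
  obtain ⟨s, hs, hind⟩ := (le_iff x).1 hx
  have hcont : Continuous fun y (v : (s : Set E)) => f y v := continuous_pi fun v => hf v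
  filter_upwards [hcont.continuousAt.eventually hind.eventually] with y hy
  exact (le_iff y).2 ⟨s, hs, hy⟩

theorem isClosed_setOf_le_finrank_ker [FiniteDimensional 𝕜 E] (f : X → E →ₗ[𝕜] F)
    (hf : ∀ v, Continuous fun x => f x v) (n : ℕ) :
    IsClosed {x | n ≤ finrank 𝕜 (ker (f x))} := by
  convert (isOpen_setOf_le_finrank_range f hf (finrank 𝕜 E + 1 - n)).isClosed_compl using 1
  ext x
  have := (f x).finrank_range_add_finrank_ker
  simp only [Set.mem_ofPred_eq, Set.mem_compl_iff]
  omega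

end Semicontinuity

namespace Matrix

variable {n K : Type*} [Fintype n] [DecidableEq n]

section Field

variable [Field K]

noncomputable def conjDiagonal (U : Matrix n n K) : (n → K) →ₗ[K] Matrix n n K :=
  LinearMap.mulLeft K Uᵀ ∘ₗ LinearMap.mulRight K Uᵀ⁻¹ ∘ₗ diagonalLinearMap n K K

theorem conjDiagonal_apply (U : Matrix n n K) (t : n → K) :
    conjDiagonal U t = Uᵀ * diagonal t * Uᵀ⁻¹ :=
  (Matrix.mul_assoc _ _ _).symm

theorem conjDiagonal_mulVec {U : Matrix n n K} (hU : IsUnit U) (t : n → K) (l : n) :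
    conjDiagonal U t *ᵥ U l = t l • U l := by
  have hUt : IsUnit Uᵀ.det := (isUnit_iff_isUnit_det _).1 ((isUnit_transpose U).2 hU)
  have hrow : U l = Uᵀ *ᵥ Pi.single l 1 := by rw [mulVec_single_one]; rfl
  rw [hrow, conjDiagonal_apply, mulVec_mulVec, Matrix.mul_assoc, nonsing_inv_mul _ hUt,
    Matrix.mul_one, ← mulVec_mulVec, diagonal_mulVec_single, mul_one, ← mulVec_smul,
    ← Pi.single_smul', smul_eq_mul, mul_one]

theorem conjDiagonal_injective {U : Matrix n n K} (hU : IsUnit U) :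
    Function.Injective (conjDiagonal U) := by
  have hUt : IsUnit Uᵀ := (isUnit_transpose U).2 hU
  intro s t h
  rw [conjDiagonal_apply, conjDiagonal_apply] at h
  exact diagonal_injective
    (hUt.mul_left_cancel ((isUnit_nonsing_inv_iff.2 hUt).mul_right_cancel h))

end Field

theorem dense_setOf_isUnit {𝕜 : Type*} [NontriviallyNormedField 𝕜] [CompleteSpace 𝕜] :
    Dense {A : Matrix n n 𝕜 | IsUnit A} := by
  intro A
  have hσ : Dense (spectrum 𝕜 (-A))ᶜ := (Matrix.finite_spectrum (-A)).countable.dense_compl 𝕜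
  have hcont : Continuous fun t : 𝕜 => algebraMap 𝕜 (Matrix n n 𝕜) t + A := by fun_prop
  simpa using map_mem_closure hcont (hσ 0) fun t ht => by
    simpa [spectrum.mem_iff] using ht

end Matrix

section Tensors

variable {m r : ℕ}

def rankOneSum (u v w : Fin r → Fin m → ℂ) : Fin m → Fin m → Fin m → ℂ :=
  fun i j k => ∑ l, u l i * v l j * w l k

theorem phiA_rankOneSum (u v w : Fin r → Fin m → ℂ) (X : Matrix (Fin m) (Fin m) ℂ) :
    phiA (rankOneSum u v w) X = rankOneSum (fun l => X *ᵥ u l) v w := by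
  funext i j k
  simp only [phiA, rankOneSum, LinearMap.coe_mk, AddHom.coe_mk, mulVec, dotProduct,
    Finset.mul_sum, Finset.sum_mul]
  rw [Finset.sum_comm]
  simp only [mul_assoc]

theorem phiB_rankOneSum (u v w : Fin r → Fin m → ℂ) (Y : Matrix (Fin m) (Fin m) ℂ) :
    phiB (rankOneSum u v w) Y = rankOneSum u (fun l => Y *ᵥ v l) w := by
  funext i j k
  simp only [phiB, rankOneSum, LinearMap.coe_mk, AddHom.coe_mk, mulVec, dotProduct,
    Finset.mul_sum, Finset.sum_mul]
  rw [Finset.sum_comm]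
  refine Finset.sum_congr rfl fun l _ => Finset.sum_congr rfl fun j' _ => by ring

theorem phiC_rankOneSum (u v w : Fin r → Fin m → ℂ) (Z : Matrix (Fin m) (Fin m) ℂ) :
    phiC (rankOneSum u v w) Z = rankOneSum u v (fun l => Z *ᵥ w l) := by
  funext i j k
  simp only [phiC, rankOneSum, LinearMap.coe_mk, AddHom.coe_mk, mulVec, dotProduct,
    Finset.mul_sum]
  rw [Finset.sum_comm]
  refine Finset.sum_congr rfl fun l _ => Finset.sum_congr rfl fun k' _ => by ring

theorem rankOneSum_smul_left (t : Fin r → ℂ) (u v w : Fin r → Fin m → ℂ) :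
    rankOneSum (fun l => t l • u l) v w = rankOneSum u (fun l => t l • v l) w := by
  funext i j k
  simp only [rankOneSum, Pi.smul_apply, smul_eq_mul]
  refine Finset.sum_congr rfl fun l _ => by ring

theorem rankOneSum_smul_middle (t : Fin r → ℂ) (u v w : Fin r → Fin m → ℂ) :
    rankOneSum u (fun l => t l • v l) w = rankOneSum u v (fun l => t l • w l) := by
  funext i j k
  simp only [rankOneSum, Pi.smul_apply, smul_eq_mul]
  refine Finset.sum_congr rfl fun l _ => by ring

/-- Its kernel is the 111-algebra of `T`: the triples `(X, Y, Z)` with `X·T = Y·T = Z·T`. -/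
noncomputable def algebra111Map (T : Fin m → Fin m → Fin m → ℂ) :
    Matrix (Fin m) (Fin m) ℂ × Matrix (Fin m) (Fin m) ℂ × Matrix (Fin m) (Fin m) ℂ →ₗ[ℂ]
      (Fin m → Fin m → Fin m → ℂ) × (Fin m → Fin m → Fin m → ℂ) :=
  (phiA T ∘ₗ LinearMap.fst ℂ _ _ - phiB T ∘ₗ LinearMap.fst ℂ _ _ ∘ₗ LinearMap.snd ℂ _ _).prod
    (phiB T ∘ₗ LinearMap.fst ℂ _ _ ∘ₗ LinearMap.snd ℂ _ _ -
      phiC T ∘ₗ LinearMap.snd ℂ _ _ ∘ₗ LinearMap.snd ℂ _ _)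

theorem algebra111Map_apply (T : Fin m → Fin m → Fin m → ℂ)
    (p : Matrix (Fin m) (Fin m) ℂ × Matrix (Fin m) (Fin m) ℂ × Matrix (Fin m) (Fin m) ℂ) :
    algebra111Map T p = (phiA T p.1 - phiB T p.2.1, phiB T p.2.1 - phiC T p.2.2) :=
  rfl

theorem mem_ker_algebra111Map {T : Fin m → Fin m → Fin m → ℂ}
    {p : Matrix (Fin m) (Fin m) ℂ × Matrix (Fin m) (Fin m) ℂ × Matrix (Fin m) (Fin m) ℂ} :
    p ∈ ker (algebra111Map T) ↔ phiA T p.1 = phiB T p.2.1 ∧ phiB T p.2.1 = phiC T p.2.2 := by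
  rw [mem_ker, algebra111Map_apply, Prod.mk_eq_zero, sub_eq_zero, sub_eq_zero]

theorem continuous_algebra111Map_apply
    (p : Matrix (Fin m) (Fin m) ℂ × Matrix (Fin m) (Fin m) ℂ × Matrix (Fin m) (Fin m) ℂ) :
    Continuous fun T => algebra111Map T p := by
  simp only [algebra111Map_apply, phiA, phiB, phiC, LinearMap.coe_mk, AddHom.coe_mk]
  fun_prop

theorem Concise.phiA_injective {T : Fin m → Fin m → Fin m → ℂ} (hc : Concise T) :
    Function.Injective (phiA T) := fun _ _ h =>
  funext fun i => hc.1 (funext fun j => funext fun k => congrFun (congrFun (congrFun h i) j) k)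

theorem Concise.phiB_injective {T : Fin m → Fin m → Fin m → ℂ} (hc : Concise T) :
    Function.Injective (phiB T) := fun _ _ h =>
  funext fun j => hc.2.1 (funext fun i => funext fun k => congrFun (congrFun (congrFun h i) j) k)

theorem Concise.phiC_injective {T : Fin m → Fin m → Fin m → ℂ} (hc : Concise T) :
    Function.Injective (phiC T) := fun _ _ h =>
  funext fun k => hc.2.2 (funext fun i => funext fun j => congrFun (congrFun (congrFun h i) j) k)

theorem Concise.finrank_ker_algebra111Map_le {T : Fin m → Fin m → Fin m → ℂ} (hc : Concise T) :
    finrank ℂ (ker (algebra111Map T)) ≤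
      finrank ℂ ↥(range (phiA T) ⊓ range (phiB T) ⊓ range (phiC T)) := by
  have hmem (p : ker (algebra111Map T)) :
      phiA T p.1.1 ∈ range (phiA T) ⊓ range (phiB T) ⊓ range (phiC T) := by
    obtain ⟨hAB, hBC⟩ := mem_ker_algebra111Map.1 p.2
    exact ⟨⟨⟨_, rfl⟩, ⟨_, hAB.symm⟩⟩, ⟨_, (hAB.trans hBC).symm⟩⟩
  refine finrank_le_finrank_of_injective
    (f := codRestrict _ (phiA T ∘ₗ LinearMap.fst ℂ _ _ ∘ₗ Submodule.subtype _) hmem) ?_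
  rintro ⟨p, hp⟩ ⟨q, hq⟩ h
  obtain ⟨hpAB, hpBC⟩ := mem_ker_algebra111Map.1 hp
  obtain ⟨hqAB, hqBC⟩ := mem_ker_algebra111Map.1 hq
  have hA : phiA T p.1 = phiA T q.1 := congrArg Subtype.val h
  have hB : phiB T p.2.1 = phiB T q.2.1 := by rw [← hpAB, ← hqAB, hA]
  have hC : phiC T p.2.2 = phiC T q.2.2 := by rw [← hpBC, ← hqBC, hB]
  exact Subtype.ext (Prod.ext (hc.phiA_injective hA)
    (Prod.ext (hc.phiB_injective hB) (hc.phiC_injective hC)))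

theorem le_finrank_ker_algebra111Map_rankOneSum {u v w : Fin m → Fin m → ℂ}
    (hu : IsUnit (Matrix.of u)) (hv : IsUnit (Matrix.of v)) (hw : IsUnit (Matrix.of w)) :
    m ≤ finrank ℂ (ker (algebra111Map (rankOneSum u v w))) := by
  let D := (conjDiagonal (Matrix.of u)).prod
    ((conjDiagonal (Matrix.of v)).prod (conjDiagonal (Matrix.of w)))
  have hD (t : Fin m → ℂ) : D t ∈ ker (algebra111Map (rankOneSum u v w)) := by
    rw [mem_ker_algebra111Map]
    have hu' (l : Fin m) : conjDiagonal (Matrix.of u) t *ᵥ u l = t l • u l :=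
      conjDiagonal_mulVec hu t l
    have hv' (l : Fin m) : conjDiagonal (Matrix.of v) t *ᵥ v l = t l • v l :=
      conjDiagonal_mulVec hv t l
    have hw' (l : Fin m) : conjDiagonal (Matrix.of w) t *ᵥ w l = t l • w l :=
      conjDiagonal_mulVec hw t l
    simp only [D, LinearMap.prod_apply, Function.prod, phiA_rankOneSum, phiB_rankOneSum,
      phiC_rankOneSum, hu', hv', hw']
    exact ⟨rankOneSum_smul_left t u v w, rankOneSum_smul_middle t u v w⟩
  have hinj : Function.Injective (codRestrict _ D hD) := fun s t h =>
    conjDiagonal_injective hu (congrArg (fun p => p.1.1) h)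
  simpa using finrank_le_finrank_of_injective hinj

theorem rankAtMost_subset_of_isClosed {C : Set (Fin m → Fin m → Fin m → ℂ)} (hC : IsClosed C)
    (h : ∀ u v w : Fin m → Fin m → ℂ, IsUnit (Matrix.of u) → IsUnit (Matrix.of v) →
      IsUnit (Matrix.of w) → rankOneSum u v w ∈ C) :
    rankAtMost m m ⊆ C := by
  rintro S ⟨u, v, w, rfl⟩
  have hF : Continuous
      fun p : (Fin m → Fin m → ℂ) × (Fin m → Fin m → ℂ) × (Fin m → Fin m → ℂ) =>
        rankOneSum p.1 p.2.1 p.2.2 := by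
    unfold rankOneSum; fun_prop
  have hunits : Dense {u : Fin m → Fin m → ℂ | IsUnit (Matrix.of u)} := Matrix.dense_setOf_isUnit
  have hmem := hunits.prod (hunits.prod hunits) (u, v, w)
  have hclosure := map_mem_closure hF hmem (t := C) fun _ ⟨hu, hv, hw⟩ => h _ _ _ hu hv hw
  exact hC.closure_subset hclosure

end Tensors

/-- The 111-equations: a concise tensor `T ∈ ℂ^m⊗ℂ^m⊗ℂ^m` of minimal border
rank `m` (a limit of sums of `m` rank-one tensors) satisfies
`dim((T(A*)⊗A) ∩ (T(B*)⊗B) ∩ (T(C*)⊗C)) ≥ m`, the intersection taken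
inside `A⊗B⊗C`. -/
theorem dim_triple_intersection_ge_of_minimal_border_rank {m : ℕ}
    (T : Fin m → Fin m → Fin m → ℂ) (hc : Concise T)
    (hbr : T ∈ closure (rankAtMost m m)) :
    m ≤ Module.finrank ℂ
      ↥(LinearMap.range (phiA T) ⊓ LinearMap.range (phiB T) ⊓
        LinearMap.range (phiC T)) := by
  have hclosed :
      IsClosed {S : Fin m → Fin m → Fin m → ℂ | m ≤ finrank ℂ (ker (algebra111Map S))} :=
    isClosed_setOf_le_finrank_ker _ continuous_algebra111Map_apply m
  have hT : m ≤ finrank ℂ (ker (algebra111Map T)) :=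
    closure_minimal (rankAtMost_subset_of_isClosed hclosed
      fun _ _ _ hu hv hw => le_finrank_ker_algebra111Map_rankOneSum hu hv hw) hclosed hbr
  exact hT.trans hc.finrank_ker_algebra111Map_le
end
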